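/- arXiv:1901.10151 — 5 statements merged into one kernel-verified Lean document; each statement's English description precedes it below -/
import Mathlib

section
/- The function f(x) = (1/m)∑_{i=1}^m min_{j=1,…,k} ‖aⁱ − xʲ‖² attains its global minimum on ℝ^{n×k}, i.e., the unconstrained MSSC problem always has a global solution. -/
/-!
Every data point lies in the ball of radius `R = ∑ ‖aⁱ‖` about the origin, so moving a center
`z` with `‖z‖ > 2R` to the origin brings it closer to every data point. Hence the objective does
not increase when all centers are truncated into the compact set `(closedBall 0 (2R))ᵏ`, and a
minimizer of the continuous objective on that set is a global minimizer.
-/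

open Finset Metric

/-- The objective of the unconstrained MSSC problem. -/
noncomputable def msscF {n m k : ℕ} [NeZero k] (a : Fin m → EuclideanSpace ℝ (Fin n))
    (x : Fin k → EuclideanSpace ℝ (Fin n)) : ℝ :=
  (1 / (m : ℝ)) * ∑ i, (Finset.univ.inf' Finset.univ_nonempty fun j => ‖a i - x j‖ ^ 2)

theorem exists_forall_le_of_le_comp {X β : Type*} [TopologicalSpace X] [Nonempty X]
    [LinearOrder β] [TopologicalSpace β] [OrderClosedTopology β] {f : X → β} {K : Set X}
    (hK : IsCompact K) (hf : ContinuousOn f K) (P : X → X) (hPK : ∀ x, P x ∈ K)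
    (hfP : ∀ x, f (P x) ≤ f x) : ∃ x₀, ∀ x, f x₀ ≤ f x := by
  obtain ⟨x₀, -, hmin⟩ := hK.exists_isMinOn ⟨_, hPK (Classical.arbitrary X)⟩ hf
  exact ⟨x₀, fun x => (hmin (hPK x)).trans (hfP x)⟩

theorem norm_sub_ite_le {E : Type*} [SeminormedAddCommGroup E] {R : ℝ} {a : E} (z : E)
    (ha : ‖a‖ ≤ R) : ‖a - if ‖z‖ ≤ 2 * R then z else 0‖ ≤ ‖a - z‖ := by
  split_ifs with hz
  · exact le_rfl
  · calc ‖a - 0‖ = ‖a‖ := by rw [sub_zero]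
      _ ≤ ‖z‖ - ‖a‖ := by linarith
      _ ≤ ‖a - z‖ := by rw [norm_sub_rev]; exact norm_sub_norm_le z a

section MSSC

variable {n m k : ℕ} [NeZero k] (a : Fin m → EuclideanSpace ℝ (Fin n))

theorem continuous_msscF : Continuous (msscF (k := k) a) :=
  continuous_const.mul <| continuous_finsetSum _ fun _ _ =>
    Continuous.finset_inf'_apply _ fun j _ =>
      (continuous_const.sub (continuous_apply j)).norm.pow 2

theorem msscF_le_msscF {x y : Fin k → EuclideanSpace ℝ (Fin n)}
    (h : ∀ i j, ‖a i - y j‖ ≤ ‖a i - x j‖) : msscF a y ≤ msscF a x := by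
  refine mul_le_mul_of_nonneg_left (sum_le_sum fun i _ => ?_) (by positivity)
  refine le_inf' _ _ fun j _ => (inf'_le _ (mem_univ j)).trans ?_
  exact pow_le_pow_left₀ (norm_nonneg _) (h i j) 2

end MSSC

theorem stmt2_general {n m k : ℕ} [NeZero k]
    (a : Fin m → EuclideanSpace ℝ (Fin n)) :
    ∃ xbar : Fin k → EuclideanSpace ℝ (Fin n),
      ∀ x : Fin k → EuclideanSpace ℝ (Fin n), msscF a xbar ≤ msscF a x := by
  set R := ∑ i, ‖a i‖
  have hR : 0 ≤ R := sum_nonneg fun i _ => norm_nonneg (a i)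
  have ha : ∀ i, ‖a i‖ ≤ R := fun i => single_le_sum (fun j _ => norm_nonneg (a j)) (mem_univ i)
  let P : EuclideanSpace ℝ (Fin n) → EuclideanSpace ℝ (Fin n) :=
    fun z => if ‖z‖ ≤ 2 * R then z else 0
  have hP : ∀ z, P z ∈ closedBall 0 (2 * R) := by
    intro z
    rw [mem_closedBall_zero_iff]
    dsimp only [P]
    split_ifs with hz
    · exact hz
    · simpa using hR
  exact exists_forall_le_of_le_comp (isCompact_univ_pi fun _ => isCompact_closedBall 0 (2 * R))
    (continuous_msscF a).continuousOn (fun x j => P (x j)) (fun x j _ => hP (x j))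
    fun x => msscF_le_msscF a fun i j => norm_sub_ite_le (x j) (ha i)

/-- The unconstrained MSSC problem always has a global solution. -/
theorem stmt2 {n m k : ℕ} [NeZero k] (hk : k ≤ m)
    (a : Fin m → EuclideanSpace ℝ (Fin n)) :
    ∃ xbar : Fin k → EuclideanSpace ℝ (Fin n),
      ∀ x : Fin k → EuclideanSpace ℝ (Fin n), msscF a xbar ≤ msscF a x :=
  stmt2_general a
end

section
/- If the data points a¹,…,aᵐ are pairwise distinct, then the set of global solutions of the unconstrained MSSC problem min f(x) = (1/m)∑_i min_j ‖aⁱ − xʲ‖² is finite. -/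
open Finset RealInnerProductSpace

variable {ι κ E : Type*} [NormedAddCommGroup E]

lemma sum_norm_sub_sq_eq_sum_norm_sub_mean_sq_add [InnerProductSpace ℝ E] (S : Finset ι)
    (a : ι → E) (y : E) :
    ∑ i ∈ S, ‖a i - y‖ ^ 2 =
      ∑ i ∈ S, ‖a i - (#S : ℝ)⁻¹ • ∑ i ∈ S, a i‖ ^ 2 +
        #S * ‖y - (#S : ℝ)⁻¹ • ∑ i ∈ S, a i‖ ^ 2 := by
  rcases S.eq_empty_or_nonempty with rfl | hS
  · simp
  set c : E := (#S : ℝ)⁻¹ • ∑ i ∈ S, a i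
  have hcard : (#S : ℝ) ≠ 0 := by exact_mod_cast hS.card_pos.ne'
  have hdev : ∑ i ∈ S, (a i - c) = 0 := by
    rw [sum_sub_distrib, sum_const, ← Nat.cast_smul_eq_nsmul ℝ, smul_inv_smul₀ hcard, sub_self]
  calc ∑ i ∈ S, ‖a i - y‖ ^ 2
      = ∑ i ∈ S, (‖a i - c‖ ^ 2 + 2 * ⟪a i - c, c - y⟫ + ‖c - y‖ ^ 2) := by
        refine sum_congr rfl fun i _ => ?_
        rw [← norm_add_sq_real, sub_add_sub_cancel]
    _ = ∑ i ∈ S, ‖a i - c‖ ^ 2 + 2 * ⟪∑ i ∈ S, (a i - c), c - y⟫ + #S * ‖c - y‖ ^ 2 := by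
        rw [sum_add_distrib, sum_add_distrib, sum_inner, sum_const, ← mul_sum, nsmul_eq_mul]
    _ = ∑ i ∈ S, ‖a i - c‖ ^ 2 + #S * ‖y - c‖ ^ 2 := by
        rw [hdev, inner_zero_left, norm_sub_rev]
        ring

section Clustering

variable [Fintype ι] [Fintype κ]

noncomputable def sumMinSqDist [Nonempty κ] (a : ι → E) (x : κ → E) : ℝ :=
  ∑ i, univ.inf' univ_nonempty fun j => ‖a i - x j‖ ^ 2

noncomputable def clusterCentroid [NormedSpace ℝ E] [DecidableEq κ] (a : ι → E) (σ : ι → κ)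
    (j : κ) : E :=
  (#{i | σ i = j} : ℝ)⁻¹ • ∑ i with σ i = j, a i

lemma sum_norm_sub_sq_comp_eq [InnerProductSpace ℝ E] [DecidableEq κ] (a : ι → E) (σ : ι → κ)
    (y : κ → E) :
    ∑ i, ‖a i - y (σ i)‖ ^ 2 =
      ∑ j, ∑ i with σ i = j, ‖a i - clusterCentroid a σ j‖ ^ 2 +
        ∑ j, #{i | σ i = j} * ‖y j - clusterCentroid a σ j‖ ^ 2 := by
  rw [← sum_add_distrib, ← sum_fiberwise univ σ]
  refine sum_congr rfl fun j _ => ?_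
  refine Eq.trans ?_ (sum_norm_sub_sq_eq_sum_norm_sub_mean_sq_add _ a (y j))
  exact sum_congr rfl fun i hi => by rw [(mem_filter.mp hi).2]

variable [Nonempty κ]

lemma sumMinSqDist_le_sum (a : ι → E) (x : κ → E) (σ : ι → κ) :
    sumMinSqDist a x ≤ ∑ i, ‖a i - x (σ i)‖ ^ 2 :=
  sum_le_sum fun _ _ => inf'_le _ (mem_univ _)

lemma exists_sumMinSqDist_eq_sum (a : ι → E) (x : κ → E) :
    ∃ σ : ι → κ, sumMinSqDist a x = ∑ i, ‖a i - x (σ i)‖ ^ 2 := by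
  choose σ _ hσ using fun i => exists_mem_eq_inf' univ_nonempty fun j => ‖a i - x j‖ ^ 2
  exact ⟨σ, sum_congr rfl fun i _ => hσ i⟩

lemma sumMinSqDist_update_lt [DecidableEq ι] [DecidableEq κ] (a : ι → E) (x : κ → E)
    {σ : ι → κ} {j₀ : κ} (hσ : ∀ i, σ i ≠ j₀) {i₀ : ι} (hi₀ : a i₀ ≠ x (σ i₀)) :
    sumMinSqDist a (Function.update x j₀ (a i₀)) < ∑ i, ‖a i - x (σ i)‖ ^ 2 := by
  refine (sumMinSqDist_le_sum a _ (Function.update σ i₀ j₀)).trans_lt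
    (sum_lt_sum (fun i _ => ?_) ⟨i₀, mem_univ _, ?_⟩)
  · rcases eq_or_ne i i₀ with rfl | hi
    · simp
    · simp [Function.update_of_ne hi, Function.update_of_ne (hσ i)]
  · rw [Function.update_self, Function.update_self, sub_self, norm_zero, zero_pow two_ne_zero]
    exact pow_pos (norm_pos_iff.mpr (sub_ne_zero.mpr hi₀)) 2

variable {a : ι → E} {x : κ → E} {σ : ι → κ}

lemma surjective_of_sumMinSqDist_le (hx : ∀ y : κ → E, sumMinSqDist a x ≤ sumMinSqDist a y)
    (ha : Function.Injective a) (hcard : Fintype.card κ ≤ Fintype.card ι)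
    (hσ : sumMinSqDist a x = ∑ i, ‖a i - x (σ i)‖ ^ 2) : Function.Surjective σ := by
  classical
  by_contra hsurj
  obtain ⟨j₀, hj₀⟩ := not_forall.mp hsurj
  have hj₀ : ∀ i, σ i ≠ j₀ := fun i h => hj₀ ⟨i, h⟩
  have hlt : #(univ.erase j₀) < #(univ : Finset ι) := by
    rw [card_erase_of_mem (mem_univ _), card_univ, card_univ]
    exact Nat.sub_one_lt_of_le Fintype.card_pos hcard
  obtain ⟨i₁, -, i₂, -, hne, hσ₁₂⟩ := exists_ne_map_eq_of_card_lt_of_maps_to hlt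
    fun i _ => mem_erase.mpr ⟨hj₀ i, mem_univ _⟩
  have hfar : ∃ i₀, a i₀ ≠ x (σ i₀) := by
    by_contra! hnear
    exact hne (ha (by rw [hnear i₁, hnear i₂, hσ₁₂]))
  obtain ⟨i₀, hi₀⟩ := hfar
  exact (hx _).not_gt (hσ ▸ sumMinSqDist_update_lt a x hj₀ hi₀)

lemma eq_clusterCentroid_of_sumMinSqDist_le [InnerProductSpace ℝ E] [DecidableEq κ]
    (hx : ∀ y : κ → E, sumMinSqDist a x ≤ sumMinSqDist a y)
    (hσ : sumMinSqDist a x = ∑ i, ‖a i - x (σ i)‖ ^ 2) (hsurj : Function.Surjective σ) :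
    x = clusterCentroid a σ := by
  set c := clusterCentroid a σ
  have hle : ∑ j, #{i | σ i = j} * ‖x j - c j‖ ^ 2 ≤ 0 := by
    have := calc ∑ i, ‖a i - x (σ i)‖ ^ 2
        = sumMinSqDist a x := hσ.symm
      _ ≤ sumMinSqDist a c := hx c
      _ ≤ ∑ i, ‖a i - c (σ i)‖ ^ 2 := sumMinSqDist_le_sum a c σ
    simpa [sum_norm_sub_sq_comp_eq a σ, c] using this
  have hzero := (sum_eq_zero_iff_of_nonneg fun j _ => by positivity).mp
    (hle.antisymm (sum_nonneg fun j _ => by positivity))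
  funext j
  obtain ⟨i, rfl⟩ := hsurj j
  have hpos : (0 : ℝ) < #{i' | σ i' = σ i} := by
    exact_mod_cast card_pos.mpr ⟨i, by simp⟩
  simpa [hpos.ne', sub_eq_zero] using hzero (σ i) (mem_univ _)

end Clustering

/-- If the data points are pairwise distinct, then the set of global solutions of the
unconstrained MSSC problem is finite. -/
theorem stmt3 {n m k : ℕ} [NeZero k] (hk : k ≤ m)
    (a : Fin m → EuclideanSpace ℝ (Fin n)) (ha : Function.Injective a) :
    {xbar : Fin k → EuclideanSpace ℝ (Fin n) |
      ∀ x : Fin k → EuclideanSpace ℝ (Fin n), msscF a xbar ≤ msscF a x}.Finite := by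
  refine (Set.finite_range (clusterCentroid a)).subset fun xbar hxbar => ?_
  have hm : (0 : ℝ) < m := by exact_mod_cast (NeZero.pos k).trans_le hk
  have hmin : ∀ y, sumMinSqDist a xbar ≤ sumMinSqDist a y := fun y =>
    le_of_mul_le_mul_left (hxbar y) (one_div_pos.mpr hm)
  obtain ⟨σ, hσ⟩ := exists_sumMinSqDist_eq_sum a xbar
  have hsurj := surjective_of_sumMinSqDist_le hmin ha (by simpa using hk) hσ
  exact ⟨σ, (eq_clusterCentroid_of_sumMinSqDist_le hmin hσ hsurj).symm⟩
end

section
/- Assume a¹,…,aᵐ are pairwise distinct and x̄ = (x̄¹,…,x̄ᵏ) is a global solution of the unconstrained MSSC problem. Then for every j ∈ {1,…,k} the attraction set A[x̄ʲ] = {aⁱ : ‖aⁱ − x̄ʲ‖ = min_q ‖aⁱ − x̄^q‖} is nonempty, and x̄ʲ = (1/|I(j)|) ∑_{i∈I(j)} aⁱ where I(j) = {i : aⁱ ∈ A[x̄ʲ]}. -/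
/-- The index set `I(j)` of the attraction set `A[xʲ]`: indices `i` such that the data
point `aⁱ` is closest to the centroid `xʲ` among all centroids. -/
noncomputable def attrIdx {n m k : ℕ} [NeZero k] (a : Fin m → EuclideanSpace ℝ (Fin n))
    (x : Fin k → EuclideanSpace ℝ (Fin n)) (j : Fin k) : Finset (Fin m) :=
  Finset.univ.filter fun i =>
    ‖a i - x j‖ = Finset.univ.inf' Finset.univ_nonempty fun q => ‖a i - x q‖

open Finset Function

section Mean

variable {ι E : Type*} [NormedAddCommGroup E] [InnerProductSpace ℝ E]

theorem Finset.sum_norm_sub_sq_eq_of_card_smul_eq_sum (s : Finset ι) (f : ι → E) {b : E}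
    (hb : (#s : ℝ) • b = ∑ i ∈ s, f i) (c : E) :
    ∑ i ∈ s, ‖f i - c‖ ^ 2 = ∑ i ∈ s, ‖f i - b‖ ^ 2 + #s * ‖b - c‖ ^ 2 := by
  have hdev : ∑ i ∈ s, (f i - b) = 0 := by
    rw [sum_sub_distrib, sum_const, ← Nat.cast_smul_eq_nsmul ℝ, hb, sub_self]
  have hcross : ∑ i ∈ s, inner ℝ (f i - b) (b - c) = 0 := by
    rw [← sum_inner, hdev, inner_zero_left]
  calc ∑ i ∈ s, ‖f i - c‖ ^ 2
      = ∑ i ∈ s, (‖f i - b‖ ^ 2 + 2 * inner ℝ (f i - b) (b - c) + ‖b - c‖ ^ 2) := by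
        refine sum_congr rfl fun i _ => ?_
        rw [← norm_add_sq_real, sub_add_sub_cancel]
    _ = ∑ i ∈ s, ‖f i - b‖ ^ 2 + #s * ‖b - c‖ ^ 2 := by
        rw [sum_add_distrib, sum_add_distrib, ← mul_sum, hcross, sum_const, nsmul_eq_mul]
        ring

theorem Finset.eq_mean_of_forall_sum_norm_sub_sq_le {s : Finset ι} (hs : s.Nonempty)
    {f : ι → E} {c : E} (hc : ∀ y, ∑ i ∈ s, ‖f i - c‖ ^ 2 ≤ ∑ i ∈ s, ‖f i - y‖ ^ 2) :
    c = (#s : ℝ)⁻¹ • ∑ i ∈ s, f i := by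
  set b := (#s : ℝ)⁻¹ • ∑ i ∈ s, f i
  have hcard : (0 : ℝ) < #s := by exact_mod_cast hs.card_pos
  have hb : (#s : ℝ) • b = ∑ i ∈ s, f i := smul_inv_smul₀ hcard.ne' _
  have hbc : #s * ‖b - c‖ ^ 2 ≤ 0 := by
    have := hc b
    rw [s.sum_norm_sub_sq_eq_of_card_smul_eq_sum f hb c] at this
    linarith
  have : ‖b - c‖ ^ 2 = 0 :=
    le_antisymm (nonpos_of_mul_nonpos_right (by linarith) hcard) (sq_nonneg _)
  exact (sub_eq_zero.1 (norm_eq_zero.1 (pow_eq_zero_iff two_ne_zero |>.1 this))).symm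

end Mean

section MSSC

variable {n m k : ℕ} [NeZero k] (a : Fin m → EuclideanSpace ℝ (Fin n))
  (x : Fin k → EuclideanSpace ℝ (Fin n))

noncomputable def minSqDist (i : Fin m) : ℝ :=
  univ.inf' univ_nonempty fun q => ‖a i - x q‖ ^ 2

theorem msscF_le_msscF_iff (y : Fin k → EuclideanSpace ℝ (Fin n)) :
    msscF a x ≤ msscF a y ↔ ∑ i, minSqDist a x i ≤ ∑ i, minSqDist a y i := by
  rcases m.eq_zero_or_pos with rfl | hm
  · simp [msscF]
  · exact mul_le_mul_iff_right₀ (by positivity)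

variable {a x}

theorem minSqDist_le (i : Fin m) (q : Fin k) : minSqDist a x i ≤ ‖a i - x q‖ ^ 2 :=
  inf'_le _ (mem_univ q)

theorem mem_attrIdx_iff {i : Fin m} {j : Fin k} :
    i ∈ attrIdx a x j ↔ ∀ q, ‖a i - x j‖ ≤ ‖a i - x q‖ := by
  simp only [attrIdx, mem_filter, mem_univ, true_and]
  refine ⟨fun h q => h ▸ inf'_le _ (mem_univ q), fun h => ?_⟩
  exact le_antisymm ((le_inf'_iff _ _).2 fun q _ => h q) (inf'_le _ (mem_univ j))

theorem minSqDist_eq_of_mem_attrIdx {i : Fin m} {j : Fin k} (hi : i ∈ attrIdx a x j) :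
    minSqDist a x i = ‖a i - x j‖ ^ 2 := by
  refine le_antisymm (minSqDist_le i j) ((le_inf'_iff _ _).2 fun q _ => ?_)
  exact pow_le_pow_left₀ (norm_nonneg _) (mem_attrIdx_iff.1 hi q) 2

theorem minSqDist_update_le_of_notMem_attrIdx {i : Fin m} {j : Fin k}
    (hi : i ∉ attrIdx a x j) (y : EuclideanSpace ℝ (Fin n)) :
    minSqDist a (update x j y) i ≤ minSqDist a x i := by
  obtain ⟨q, -, hq⟩ := exists_mem_eq_inf' univ_nonempty fun q => ‖a i - x q‖ ^ 2
  have hqj : q ≠ j := by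
    rintro rfl
    refine hi (mem_attrIdx_iff.2 fun p => ?_)
    rw [← pow_le_pow_iff_left₀ (norm_nonneg _) (norm_nonneg _) two_ne_zero]
    exact hq ▸ inf'_le _ (mem_univ p)
  calc minSqDist a (update x j y) i ≤ ‖a i - update x j y q‖ ^ 2 := minSqDist_le i q
    _ = minSqDist a x i := by rw [update_of_ne hqj, minSqDist, hq]

theorem minSqDist_update_le (i : Fin m) (j : Fin k) (y : EuclideanSpace ℝ (Fin n)) :
    minSqDist a (update x j y) i ≤ ‖a i - y‖ ^ 2 := by
  simpa using minSqDist_le (x := update x j y) i j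

theorem sum_attrIdx_norm_sub_sq_le_of_minimal
    (hmin : ∀ x' : Fin k → EuclideanSpace ℝ (Fin n),
      ∑ i, minSqDist a x i ≤ ∑ i, minSqDist a x' i) (j : Fin k)
    (y : EuclideanSpace ℝ (Fin n)) :
    ∑ i ∈ attrIdx a x j, ‖a i - x j‖ ^ 2 ≤ ∑ i ∈ attrIdx a x j, ‖a i - y‖ ^ 2 := by
  set S := attrIdx a x j
  have hleft :
      ∑ i ∈ S, ‖a i - x j‖ ^ 2 + ∑ i ∈ Sᶜ, minSqDist a x i = ∑ i, minSqDist a x i := by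
    rw [← sum_congr rfl fun i hi => minSqDist_eq_of_mem_attrIdx hi, sum_add_sum_compl]
  have hright : ∑ i, minSqDist a (update x j y) i
      ≤ ∑ i ∈ S, ‖a i - y‖ ^ 2 + ∑ i ∈ Sᶜ, minSqDist a x i := by
    rw [← sum_add_sum_compl S]
    gcongr with i _ i hi
    · exact minSqDist_update_le i j y
    · exact minSqDist_update_le_of_notMem_attrIdx (mem_compl.1 hi) y
  linarith [hmin (update x j y)]

/-- Pigeonhole: otherwise every `aⁱ` sits on a centre other than `xʲ`, injectively in `i`. -/
theorem exists_minSqDist_pos_of_attrIdx_eq_empty (hk : k ≤ m) (ha : Injective a) {j : Fin k}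
    (hj : attrIdx a x j = ∅) : ∃ t, 0 < minSqDist a x t := by
  by_contra! h
  have hcentre : ∀ i, ∃ q, a i = x q := fun i => by
    obtain ⟨q, -, hq⟩ := exists_mem_eq_inf' univ_nonempty fun q => ‖a i - x q‖ ^ 2
    have : ‖a i - x q‖ ^ 2 = 0 := le_antisymm (hq ▸ h i) (sq_nonneg _)
    exact ⟨q, sub_eq_zero.1 (norm_eq_zero.1 (pow_eq_zero_iff two_ne_zero |>.1 this))⟩
  choose c hc using hcentre
  have hcj : ∀ i, c i ≠ j := fun i hij => by
    refine notMem_empty i (hj ▸ mem_attrIdx_iff.2 fun q => ?_)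
    rw [← hij, ← hc, sub_self, norm_zero]
    exact norm_nonneg _
  have hinj : Injective c := fun i i' h => ha (by rw [hc, hc, h])
  have := Fintype.card_lt_of_injective_not_surjective c hinj fun hsurj =>
    (hsurj j).elim hcj
  simp only [Fintype.card_fin] at this
  omega

theorem attrIdx_nonempty_of_minimal (hk : k ≤ m) (ha : Injective a)
    (hmin : ∀ x' : Fin k → EuclideanSpace ℝ (Fin n),
      ∑ i, minSqDist a x i ≤ ∑ i, minSqDist a x' i) (j : Fin k) :
    (attrIdx a x j).Nonempty := by
  rw [nonempty_iff_ne_empty]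
  intro hj
  obtain ⟨t, ht⟩ := exists_minSqDist_pos_of_attrIdx_eq_empty hk ha hj
  have hlt : ∑ i, minSqDist a (update x j (a t)) i < ∑ i, minSqDist a x i := by
    refine sum_lt_sum (fun i _ => ?_) ⟨t, mem_univ t, ?_⟩
    · exact minSqDist_update_le_of_notMem_attrIdx (hj ▸ notMem_empty i) _
    · calc minSqDist a (update x j (a t)) t ≤ ‖a t - a t‖ ^ 2 := minSqDist_update_le t j (a t)
        _ = 0 := by simp
        _ < minSqDist a x t := ht
  exact (hmin _).not_gt hlt

end MSSC

/-- If the data points are pairwise distinct and `x̄` is a global solution of the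
unconstrained MSSC problem, then every attraction set `A[x̄ʲ]` is nonempty and `x̄ʲ` is
the barycenter of its attraction set. -/
theorem stmt4 {n m k : ℕ} [NeZero k] (hk : k ≤ m)
    (a : Fin m → EuclideanSpace ℝ (Fin n)) (ha : Function.Injective a)
    (xbar : Fin k → EuclideanSpace ℝ (Fin n))
    (hglob : ∀ x : Fin k → EuclideanSpace ℝ (Fin n), msscF a xbar ≤ msscF a x) :
    ∀ j : Fin k, (attrIdx a xbar j).Nonempty ∧
      xbar j = ((attrIdx a xbar j).card : ℝ)⁻¹ • ∑ i ∈ attrIdx a xbar j, a i := by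
  have hmin : ∀ x, ∑ i, minSqDist a xbar i ≤ ∑ i, minSqDist a x i :=
    fun x => (msscF_le_msscF_iff a xbar x).1 (hglob x)
  intro j
  have hne := attrIdx_nonempty_of_minimal hk ha hmin j
  exact ⟨hne, eq_mean_of_forall_sum_norm_sub_sq_le hne
    (sum_attrIdx_norm_sub_sq_le_of_minimal hmin j)⟩
end

section
/- If x̄ = (x̄¹,…,x̄ᵏ) is a global solution of the unconstrained MSSC problem with pairwise distinct data points a¹,…,aᵐ and k ≤ m, then the components of x̄ are pairwise distinct: x̄^{j₁} ≠ x̄^{j₂} whenever j₁ ≠ j₂. -/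
open Function Set

theorem injective_of_range_subset_range_of_card_le {ι κ E : Type*} [Finite κ] {a : ι → E}
    {x : κ → E} (ha : Injective a) (hcard : Nat.card κ ≤ Nat.card ι)
    (hsub : range a ⊆ range x) : Injective x := by
  choose g hg using fun i => hsub (mem_range_self i)
  have hxg : x ∘ g = a := funext hg
  have hg_inj : Injective g := Injective.of_comp (f := x) (hxg ▸ ha)
  exact Injective.of_comp_right (hxg ▸ ha) (hg_inj.bijective_of_nat_card_le hcard).surjective

theorem range_subset_range_update_of_apply_eq {κ E : Type*} [DecidableEq κ] {x : κ → E}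
    {j₁ j₂ : κ} (hne : j₁ ≠ j₂) (heq : x j₁ = x j₂) (p : E) :
    range x ⊆ range (update x j₂ p) := by
  rintro _ ⟨j, rfl⟩
  by_cases hj : j = j₂
  · exact ⟨j₁, by rw [update_of_ne hne, heq, hj]⟩
  · exact ⟨j, update_of_ne hj p x⟩

section SqDistToNearest

variable {κ E : Type*} [Fintype κ] [Nonempty κ] [NormedAddCommGroup E]

noncomputable def sqDistToNearest (x : κ → E) (q : E) : ℝ :=
  Finset.univ.inf' Finset.univ_nonempty fun j => ‖q - x j‖ ^ 2

theorem sqDistToNearest_le_of_range_subset {x y : κ → E} (hsub : range x ⊆ range y) (q : E) :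
    sqDistToNearest y q ≤ sqDistToNearest x q := by
  refine Finset.le_inf' _ _ fun j _ => ?_
  obtain ⟨j', hj'⟩ := hsub (mem_range_self j)
  exact hj' ▸ Finset.inf'_le _ (Finset.mem_univ j')

theorem sqDistToNearest_pos_iff {x : κ → E} {q : E} :
    0 < sqDistToNearest x q ↔ q ∉ range x := by
  simp [sqDistToNearest, Finset.lt_inf'_iff, sub_eq_zero, sq_pos_iff, eq_comm]

end SqDistToNearest

theorem msscF_eq {n m k : ℕ} [NeZero k] (a : Fin m → EuclideanSpace ℝ (Fin n))
    (x : Fin k → EuclideanSpace ℝ (Fin n)) :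
    msscF a x = (1 / (m : ℝ)) * ∑ i, sqDistToNearest x (a i) :=
  rfl

theorem msscF_lt_of_sqDistToNearest_lt {n m k : ℕ} [NeZero k]
    {a : Fin m → EuclideanSpace ℝ (Fin n)} {x y : Fin k → EuclideanSpace ℝ (Fin n)}
    (hle : ∀ i, sqDistToNearest y (a i) ≤ sqDistToNearest x (a i))
    {i₀ : Fin m} (hlt : sqDistToNearest y (a i₀) < sqDistToNearest x (a i₀)) :
    msscF a y < msscF a x := by
  have hm : (0 : ℝ) < m := Nat.cast_pos.2 (Fin.pos i₀)
  rw [msscF_eq, msscF_eq]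
  exact mul_lt_mul_of_pos_left
    (Finset.sum_lt_sum (fun i _ => hle i) ⟨i₀, Finset.mem_univ _, hlt⟩) (one_div_pos.2 hm)

theorem msscF_update_lt {n m k : ℕ} [NeZero k] (a : Fin m → EuclideanSpace ℝ (Fin n))
    {x : Fin k → EuclideanSpace ℝ (Fin n)} {j₁ j₂ : Fin k} (hne : j₁ ≠ j₂) (heq : x j₁ = x j₂)
    {i₀ : Fin m} (hi₀ : a i₀ ∉ range x) :
    msscF a (update x j₂ (a i₀)) < msscF a x := by
  have hsub := range_subset_range_update_of_apply_eq hne heq (a i₀)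
  refine msscF_lt_of_sqDistToNearest_lt (fun i => sqDistToNearest_le_of_range_subset hsub _)
    (i₀ := i₀) ?_
  have hzero : ¬ 0 < sqDistToNearest (update x j₂ (a i₀)) (a i₀) :=
    sqDistToNearest_pos_iff.not_left.2 ⟨j₂, update_self j₂ (a i₀) x⟩
  exact (not_lt.1 hzero).trans_lt (sqDistToNearest_pos_iff.2 hi₀)

/-- If the data points are pairwise distinct, `k ≤ m`, and `x̄` is a global solution of
the unconstrained MSSC problem, then the components of `x̄` are pairwise distinct. -/
theorem stmt5 {n m k : ℕ} [NeZero k] (hk : k ≤ m)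
    (a : Fin m → EuclideanSpace ℝ (Fin n)) (ha : Function.Injective a)
    (xbar : Fin k → EuclideanSpace ℝ (Fin n))
    (hglob : ∀ x : Fin k → EuclideanSpace ℝ (Fin n), msscF a xbar ≤ msscF a x) :
    ∀ j₁ j₂ : Fin k, j₁ ≠ j₂ → xbar j₁ ≠ xbar j₂ := by
  intro j₁ j₂ hne heq
  obtain ⟨i₀, hi₀⟩ : ∃ i₀, a i₀ ∉ range xbar := by
    by_contra! hall
    refine hne (injective_of_range_subset_range_of_card_le ha ?_ (range_subset_iff.2 hall) heq)
    simpa using hk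
  exact (hglob _).not_gt (msscF_update_lt a hne heq hi₀)
end

section
/- Let a ∈ Y₁ and let c(a) be the barycenter of the nonempty set A₁(a) = {aⁱ : ‖a−aⁱ‖² < dₗ(aⁱ)}. Then g(c(a)) ≤ g(a); consequently g(c(a)) < (1/m)∑_i dₗ(aⁱ) and hence c(a) ∈ Y₁. -/
/-!
On the set `A₁` of points `aⁱ` that are strictly closer than their threshold to `y₀`, the
barycenter `c` does no worse than `y₀` for the untruncated sum of squared distances. Truncating
at `dₗ(aⁱ)` can only lower the terms at `c` and leaves those at `y₀` unchanged on `A₁`, while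
off `A₁` the terms at `y₀` already equal the threshold. Hence `g(c) ≤ g(y₀) < (1/m) ∑ dₗ(aⁱ)`,
and the strict inequality forces some term at `c` to be below its threshold.
-/

open Finset

section Barycenter

variable {ι E : Type*} [NormedAddCommGroup E] [InnerProductSpace ℝ E]

theorem sum_barycenter_sub_eq_zero (s : Finset ι) (a : ι → E) :
    ∑ i ∈ s, ((#s : ℝ)⁻¹ • ∑ j ∈ s, a j - a i) = 0 := by
  rcases s.eq_empty_or_nonempty with rfl | hs
  · simp
  have hcard : (#s : ℝ) ≠ 0 := Nat.cast_ne_zero.mpr hs.card_pos.ne'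
  rw [sum_sub_distrib, sum_const, ← Nat.cast_smul_eq_nsmul ℝ, smul_smul,
    mul_inv_cancel₀ hcard, one_smul, sub_self]

/-- The Huygens–Steiner (parallel axis) identity. -/
theorem sum_norm_sub_sq_eq_sum_norm_barycenter_sub_sq_add (s : Finset ι) (a : ι → E) (y : E) :
    ∑ i ∈ s, ‖y - a i‖ ^ 2 =
      ∑ i ∈ s, ‖(#s : ℝ)⁻¹ • ∑ j ∈ s, a j - a i‖ ^ 2 +
        #s * ‖y - (#s : ℝ)⁻¹ • ∑ j ∈ s, a j‖ ^ 2 := by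
  set c : E := (#s : ℝ)⁻¹ • ∑ j ∈ s, a j
  have hcross : ∑ i ∈ s, inner ℝ (y - c) (c - a i) = 0 := by
    rw [← inner_sum, sum_barycenter_sub_eq_zero, inner_zero_right]
  calc ∑ i ∈ s, ‖y - a i‖ ^ 2
      = ∑ i ∈ s, (‖y - c‖ ^ 2 + 2 * inner ℝ (y - c) (c - a i) + ‖c - a i‖ ^ 2) := by
        refine sum_congr rfl fun i _ => ?_
        rw [← norm_add_sq_real, sub_add_sub_cancel]
    _ = ∑ i ∈ s, ‖c - a i‖ ^ 2 + #s * ‖y - c‖ ^ 2 := by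
        rw [sum_add_distrib, sum_add_distrib, ← mul_sum, hcross, sum_const, nsmul_eq_mul]
        ring

theorem sum_norm_barycenter_sub_sq_le (s : Finset ι) (a : ι → E) (y : E) :
    ∑ i ∈ s, ‖(#s : ℝ)⁻¹ • ∑ j ∈ s, a j - a i‖ ^ 2 ≤ ∑ i ∈ s, ‖y - a i‖ ^ 2 := by
  rw [sum_norm_sub_sq_eq_sum_norm_barycenter_sub_sq_add s a y]
  exact le_add_of_nonneg_right (by positivity)

end Barycenter

section TruncatedSum

variable {ι : Type*} [Fintype ι] (d u v : ι → ℝ)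

theorem sum_min_le_sum_min_of_sum_filter_le
    (h : ∑ i with v i < d i, u i ≤ ∑ i with v i < d i, v i) :
    ∑ i, min (d i) (u i) ≤ ∑ i, min (d i) (v i) := by
  rw [← sum_filter_add_sum_filter_not univ (fun i => v i < d i),
    ← sum_filter_add_sum_filter_not univ (fun i => v i < d i)]
  gcongr ?_ + ?_
  · calc ∑ i with v i < d i, min (d i) (u i) ≤ ∑ i with v i < d i, u i :=
          sum_le_sum fun i _ => min_le_right _ _
      _ ≤ ∑ i with v i < d i, v i := h
      _ = ∑ i with v i < d i, min (d i) (v i) :=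
          sum_congr rfl fun i hi => (min_eq_right (mem_filter.mp hi).2.le).symm
  · refine sum_le_sum fun i hi => ?_
    rw [min_eq_left (not_lt.mp (mem_filter.mp hi).2)]
    exact min_le_left _ _

theorem sum_min_lt_sum_of_exists_lt (h : ∃ i, v i < d i) :
    ∑ i, min (d i) (v i) < ∑ i, d i := by
  obtain ⟨i, hi⟩ := h
  exact sum_lt_sum (fun j _ => min_le_left _ _) ⟨i, mem_univ i, min_lt_iff.mpr (Or.inr hi)⟩

theorem exists_lt_of_sum_min_lt (h : ∑ i, min (d i) (v i) < ∑ i, d i) :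
    ∃ i, v i < d i := by
  obtain ⟨i, -, hi⟩ := exists_lt_of_sum_lt h
  exact ⟨i, (min_lt_iff.mp hi).resolve_left (lt_irrefl _)⟩

end TruncatedSum

theorem stmt15_general {n m : ℕ} (a : Fin m → EuclideanSpace ℝ (Fin n))
    (d : Fin m → ℝ)
    (g : EuclideanSpace ℝ (Fin n) → ℝ)
    (hg : ∀ y, g y = (1 / (m : ℝ)) * ∑ i, min (d i) (‖y - a i‖ ^ 2))
    (y₀ : EuclideanSpace ℝ (Fin n)) (hy₀ : ∃ i, ‖y₀ - a i‖ ^ 2 < d i)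
    (c : EuclideanSpace ℝ (Fin n))
    (hc : c = (((Finset.univ.filter fun i => ‖y₀ - a i‖ ^ 2 < d i).card : ℝ))⁻¹ •
      ∑ i ∈ Finset.univ.filter fun i => ‖y₀ - a i‖ ^ 2 < d i, a i) :
    g c ≤ g y₀ ∧ g c < (1 / (m : ℝ)) * ∑ i, d i ∧ ∃ i, ‖c - a i‖ ^ 2 < d i := by
  have hm : (0 : ℝ) < 1 / m := by
    obtain ⟨i, -⟩ := hy₀
    have : 0 < m := i.pos
    positivity
  have hle : g c ≤ g y₀ := by
    rw [hg, hg, hc]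
    exact mul_le_mul_of_nonneg_left
      (sum_min_le_sum_min_of_sum_filter_le _ _ _ (sum_norm_barycenter_sub_sq_le _ a y₀)) hm.le
  have hlt : g c < 1 / m * ∑ i, d i :=
    hle.trans_lt (by rw [hg]; exact mul_lt_mul_of_pos_left (sum_min_lt_sum_of_exists_lt _ _ hy₀) hm)
  refine ⟨hle, hlt, exists_lt_of_sum_min_lt d _ ?_⟩
  rw [hg] at hlt
  exact lt_of_mul_lt_mul_left hlt hm.le

/-- Let `y₀ ∈ Y₁` and let `c` be the barycenter of the nonempty set
`A₁(y₀) = {aⁱ : ‖y₀−aⁱ‖² < dₗ(aⁱ)}`. Then `g(c) ≤ g(y₀)`; consequently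
`g(c) < (1/m) ∑ᵢ dₗ(aⁱ)` and `c ∈ Y₁`. -/
theorem stmt15 {n m : ℕ} (a : Fin m → EuclideanSpace ℝ (Fin n))
    (d : Fin m → ℝ) (hd : ∀ i, 0 ≤ d i)
    (g : EuclideanSpace ℝ (Fin n) → ℝ)
    (hg : ∀ y, g y = (1 / (m : ℝ)) * ∑ i, min (d i) (‖y - a i‖ ^ 2))
    (y₀ : EuclideanSpace ℝ (Fin n)) (hy₀ : ∃ i, ‖y₀ - a i‖ ^ 2 < d i)
    (c : EuclideanSpace ℝ (Fin n))
    (hc : c = (((Finset.univ.filter fun i => ‖y₀ - a i‖ ^ 2 < d i).card : ℝ))⁻¹ •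
      ∑ i ∈ Finset.univ.filter fun i => ‖y₀ - a i‖ ^ 2 < d i, a i) :
    g c ≤ g y₀ ∧ g c < (1 / (m : ℝ)) * ∑ i, d i ∧ ∃ i, ‖c - a i‖ ^ 2 < d i :=
  stmt15_general a d g hg y₀ hy₀ c hc
end
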